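/- arXiv:1805.08757 — 3 statements merged into one kernel-verified Lean document; each statement's English description precedes it below -/
import Mathlib

section
/- Let G be a torsion-free nilpotent group with center C. Suppose G has an abelian subgroup H containing C such that for every x ∈ G there exists a positive integer r with x^r ∈ H (equivalently, x^r·C ∈ H/C). Then G is abelian. -/
/-!
Write `Zᵢ` for the upper central series. If `⁅x, g⁆` lies in `Zᵢ₊₁` it is central modulo `Zᵢ`, so
`⁅xⁿ, g⁆ ≡ ⁅x, g⁆ⁿ` modulo `Zᵢ`. Together with torsion-freeness this shows, by induction on `i`,
that every quotient `Zᵢ₊₁ / Zᵢ` is torsion-free, and then, descending the upper central series,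
that `xⁿ` commutes with `y` only if `x` does. Hence any two elements commute, since suitable powers
of them lie in the abelian subgroup `H`.
-/

open scoped commutatorElement

section

variable {G : Type*} [Group G]

theorem commutatorElement_pow_left_of_mem_center {a b : G} (h : ⁅a, b⁆ ∈ Subgroup.center G)
    (n : ℕ) : ⁅a ^ n, b⁆ = ⁅a, b⁆ ^ n := by
  induction n with
  | zero => simp
  | succ n ih =>
    have hc := Subgroup.mem_center_iff.mp h (a ^ n)
    calc ⁅a ^ (n + 1), b⁆ = a ^ n * ⁅a, b⁆ * (a ^ n)⁻¹ * ⁅a ^ n, b⁆ := by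
          simp only [commutatorElement_def]; group
      _ = ⁅a, b⁆ ^ (n + 1) := by rw [hc, ih]; group

namespace Subgroup

theorem commutatorElement_pow_mem_upperCentralSeries {i n : ℕ} {x g : G}
    (h : ⁅x, g⁆ ∈ upperCentralSeries G (i + 1)) (hpow : ⁅x ^ n, g⁆ ∈ upperCentralSeries G i) :
    ⁅x, g⁆ ^ n ∈ upperCentralSeries G i := by
  let π := QuotientGroup.mk' (upperCentralSeries G i)
  have hcenter : ⁅π x, π g⁆ ∈ center (G ⧸ upperCentralSeries G i) := by
    rw [← map_commutatorElement]
    exact (upperCentralSeriesStep_eq_comap_center _).le h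
  rw [← QuotientGroup.ker_mk' (upperCentralSeries G i), MonoidHom.mem_ker] at hpow ⊢
  rwa [map_pow, map_commutatorElement, ← commutatorElement_pow_left_of_mem_center hcenter,
    ← map_pow, ← map_commutatorElement]

theorem mem_upperCentralSeries_of_pow_mem (htf : ∀ g : G, g ≠ 1 → ¬IsOfFinOrder g) {n : ℕ}
    (hn : 0 < n) :
    ∀ {i : ℕ} {x : G}, x ∈ upperCentralSeries G (i + 1) → x ^ n ∈ upperCentralSeries G i →
      x ∈ upperCentralSeries G i
  | 0, x, _, hxn => by
    rw [upperCentralSeries_zero, mem_bot] at hxn ⊢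
    by_contra hx
    exact htf x hx (isOfFinOrder_iff_pow_eq_one.mpr ⟨n, hn, hxn⟩)
  | i + 1, x, hx, hxn => mem_upperCentralSeries_succ_iff.mpr fun g => by
    have hxg := mem_upperCentralSeries_succ_iff.mp hx g
    exact mem_upperCentralSeries_of_pow_mem htf hn hxg
      (commutatorElement_pow_mem_upperCentralSeries hxg (mem_upperCentralSeries_succ_iff.mp hxn g))

end Subgroup

theorem Commute.of_pow_left_of_isNilpotent [Group.IsNilpotent G]
    (htf : ∀ g : G, g ≠ 1 → ¬IsOfFinOrder g) {n : ℕ} (hn : 0 < n) {x y : G}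
    (h : Commute (x ^ n) y) : Commute x y := by
  have hdescend : ∀ i, ⁅x, y⁆ ∈ Subgroup.upperCentralSeries G i →
      ⁅x, y⁆ ∈ Subgroup.upperCentralSeries G 0 := by
    intro i
    induction i with
    | zero => exact id
    | succ i ih =>
      refine fun hi => ih (Subgroup.mem_upperCentralSeries_of_pow_mem htf hn hi ?_)
      refine Subgroup.commutatorElement_pow_mem_upperCentralSeries hi ?_
      rw [commutatorElement_eq_one_iff_commute.mpr h]
      exact one_mem _
  obtain ⟨c, hc⟩ := Group.IsNilpotent.nilpotent G
  have hbot := hdescend c (hc ▸ Subgroup.mem_top _)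
  rw [Subgroup.upperCentralSeries_zero, Subgroup.mem_bot] at hbot
  exact commutatorElement_eq_one_iff_commute.mp hbot

end

theorem stmt_5_general (G : Type*) [Group G] (hnilp : Group.IsNilpotent G)
    (htf : ∀ g : G, g ≠ 1 → ¬IsOfFinOrder g)
    (H : Subgroup G)
    (hHab : ∀ a b : ↥H, a * b = b * a)
    (hroot : ∀ x : G, ∃ r : ℕ, 0 < r ∧ x ^ r ∈ H) :
    ∀ a b : G, a * b = b * a := by
  intro a b
  obtain ⟨r, hr, har⟩ := hroot a
  obtain ⟨s, hs, hbs⟩ := hroot b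
  have hpows : Commute (a ^ r) (b ^ s) := congrArg Subtype.val (hHab ⟨_, har⟩ ⟨_, hbs⟩)
  have hab : Commute a (b ^ s) := hpows.of_pow_left_of_isNilpotent htf hr
  exact (hab.symm.of_pow_left_of_isNilpotent htf hs).symm

/-- a torsion-free nilpotent group with an abelian subgroup H
containing the center such that every element has a positive power lying in H
is abelian. -/
theorem stmt_5 (G : Type*) [Group G] (hnilp : Group.IsNilpotent G)
    (htf : ∀ g : G, g ≠ 1 → ¬IsOfFinOrder g)
    (H : Subgroup G) (hCH : Subgroup.center G ≤ H)
    (hHab : ∀ a b : ↥H, a * b = b * a)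
    (hroot : ∀ x : G, ∃ r : ℕ, 0 < r ∧ x ^ r ∈ H) :
    ∀ a b : G, a * b = b * a :=
  stmt_5_general G hnilp htf H hHab hroot
end

section
/- Let G be a finitely generated torsion-free nilpotent group of nilpotency class exactly 2, and let σ be an involution on G. Then G contains a σ-invariant Heisenberg subgroup; more precisely, there exist x, y ∈ G such that [x,y] ≠ 1, σ(x) ∈ {x, x⁻¹}, and σ(y) ∈ {y, y⁻¹}. -/
/-!
Put `τ g = (σ g)⁻¹`, an involutive automorphism. Every square splits as
`g ^ 2 = (g * τ g) * ((τ g)⁻¹ * g)`, where `τ` inverts the second factor and fixes the first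
modulo the centre; squaring either factor and correcting by a central element makes it fixed
or inverted by `τ`. In class 2 without 2-torsion, `[a ^ 2, b] = [a, b] ^ 2`, so squaring and
central factors never destroy non-commutativity. Starting from a non-commuting pair `u, v`, some
factor of `u ^ 2` fails to commute with some factor of `v ^ 2`, and these two factors give the
required pair.
-/

/-- A monoid is torsion-free if all its non-identity elements have infinite order
(the definition of `Monoid.IsTorsionFree` in the older Mathlib, since removed). -/
def Monoid.IsTorsionFree (G : Type*) [Monoid G] : Prop :=
  ∀ g : G, g ≠ 1 → ¬IsOfFinOrder g

open scoped commutatorElement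

section Class2

variable {G : Type*} [Group G]

theorem commutatorElement_mem_center (hG : commutator G ≤ Subgroup.center G) (a b : G) :
    ⁅a, b⁆ ∈ Subgroup.center G :=
  hG <| Subgroup.commutator_mem_commutator (Subgroup.mem_top a) (Subgroup.mem_top b)

theorem commutatorElement_sq_left (hG : commutator G ≤ Subgroup.center G) (a b : G) :
    ⁅a ^ 2, b⁆ = ⁅a, b⁆ ^ 2 := by
  rw [pow_two, commutatorElement_mul_left_eq_conj_mul,
    Subgroup.mem_center_iff.mp (commutatorElement_mem_center hG a b) a,
    mul_inv_cancel_right, pow_two]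

theorem Commute.of_sq_left (hG : commutator G ≤ Subgroup.center G)
    (h2 : ∀ g : G, g ^ 2 = 1 → g = 1) {a b : G} (h : Commute (a ^ 2) b) : Commute a b := by
  rw [← commutatorElement_eq_one_iff_commute] at h ⊢
  exact h2 _ (commutatorElement_sq_left hG a b ▸ h)

theorem Commute.of_central_mul_left {z a b : G} (hz : z ∈ Subgroup.center G)
    (h : Commute (z * a) b) : Commute a b := by
  have hz' : Commute z⁻¹ b := (Subgroup.mem_center_iff.mp (inv_mem hz) b).symm
  simpa using hz'.mul_left h

theorem Commute.of_central_mul_sq (hG : commutator G ≤ Subgroup.center G)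
    (h2 : ∀ g : G, g ^ 2 = 1 → g = 1) {a b z w : G} (hz : z ∈ Subgroup.center G)
    (hw : w ∈ Subgroup.center G) (h : Commute (z * a ^ 2) (w * b ^ 2)) : Commute a b :=
  have hab : Commute (b ^ 2) (a ^ 2) := (((h.of_central_mul_left hz).symm).of_central_mul_left hw)
  .of_sq_left hG h2 (.symm (.of_sq_left hG h2 hab))

theorem exists_not_commute_of_not_commute_mul {P : G → Prop} {a a' b b' : G}
    (ha : P a) (ha' : P a') (hb : P b) (hb' : P b') (h : ¬Commute (a * a') (b * b')) :
    ∃ x y, P x ∧ P y ∧ ¬Commute x y := by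
  by_contra! hc
  exact h (((hc a b ha hb).mul_right (hc a b' ha hb')).mul_left
    ((hc a' b ha' hb).mul_right (hc a' b' ha' hb')))

end Class2

section Involution

variable {G : Type*} [Group G]

def IsFixedOrInverted (τ : G → G) (x : G) : Prop :=
  τ x = x ∨ τ x = x⁻¹

theorem isFixedOrInverted_inv_comp_iff (f : G → G) (x : G) :
    IsFixedOrInverted (fun g => (f g)⁻¹) x ↔ IsFixedOrInverted f x := by
  simp only [IsFixedOrInverted, inv_eq_iff_eq_inv, inv_inv, or_comm]

variable {τ : G →* G}

theorem isFixedOrInverted_central_mul_sq (hτ : Function.Involutive τ) {a c : G}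
    (hc : c ∈ Subgroup.center G) (ha : τ a = c * a) : IsFixedOrInverted τ (c * a ^ 2) := by
  have hτc : τ c = c⁻¹ := by
    have := hτ a
    rw [ha, map_mul, ha, ← mul_assoc, mul_eq_right] at this
    exact eq_inv_of_mul_eq_one_left this
  left
  rw [map_mul, map_pow, hτc, ha, pow_two, pow_two]
  have := Subgroup.mem_center_iff.mp hc a
  calc c⁻¹ * (c * a * (c * a)) = c⁻¹ * (c * (a * c) * a) := by group
    _ = c * (a * a) := by rw [this]; group

theorem exists_mul_eq_sq (hτ : Function.Involutive τ) (hG : commutator G ≤ Subgroup.center G)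
    (g : G) : ∃ p m : G, p * m = g ^ 2 ∧
      (∃ z ∈ Subgroup.center G, IsFixedOrInverted τ (z * p ^ 2)) ∧
      (∃ z ∈ Subgroup.center G, IsFixedOrInverted τ (z * m ^ 2)) := by
  have hc := commutatorElement_mem_center hG (τ g) g
  refine ⟨g * τ g, (τ g)⁻¹ * g, by rw [pow_two]; group,
    ⟨_, hc, isFixedOrInverted_central_mul_sq hτ hc ?_⟩, ⟨1, one_mem _, .inr ?_⟩⟩
  · rw [map_mul, hτ, commutatorElement_def]; group
  · rw [one_mul, map_pow, map_mul, map_inv, hτ g, ← inv_pow, mul_inv_rev, inv_inv]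

theorem exists_not_commute_isFixedOrInverted (hτ : Function.Involutive τ)
    (hG : commutator G ≤ Subgroup.center G) (h2 : ∀ g : G, g ^ 2 = 1 → g = 1) {u v : G}
    (huv : ¬Commute u v) :
    ∃ x y : G, ¬Commute x y ∧ IsFixedOrInverted τ x ∧ IsFixedOrInverted τ y := by
  obtain ⟨p, m, hpm, hp, hm⟩ := exists_mul_eq_sq hτ hG u
  obtain ⟨p', m', hpm', hp', hm'⟩ := exists_mul_eq_sq hτ hG v
  have hsq : ¬Commute (p * m) (p' * m') := by
    rw [hpm, hpm']
    exact fun h => huv (.of_central_mul_sq hG h2 (one_mem _) (one_mem _) (by simpa using h))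
  obtain ⟨a, b, ⟨z, hz, ha⟩, ⟨w, hw, hb⟩, hab⟩ :=
    exists_not_commute_of_not_commute_mul
      (P := fun x => ∃ z ∈ Subgroup.center G, IsFixedOrInverted τ (z * x ^ 2))
      hp hm hp' hm' hsq
  exact ⟨z * a ^ 2, w * b ^ 2, fun h => hab (.of_central_mul_sq hG h2 hz hw h), ha, hb⟩

end Involution

def MonoidHom.invOfAntiHom {G : Type*} [Group G] (σ : G → G)
    (hσ : ∀ a b : G, σ (a * b) = σ b * σ a) : G →* G :=
  MonoidHom.mk' (fun g => (σ g)⁻¹) fun a b => by simp [hσ]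

theorem MonoidHom.invOfAntiHom_involutive {G : Type*} [Group G] {σ : G → G}
    (hσ : ∀ a b : G, σ (a * b) = σ b * σ a) (hσσ : Function.Involutive σ) :
    Function.Involutive (invOfAntiHom σ hσ) := fun g => by
  have hσinv (g : G) : σ g⁻¹ = (σ g)⁻¹ := inv_injective (map_inv (invOfAntiHom σ hσ) g)
  simp [invOfAntiHom, hσinv, hσσ g]

theorem stmt_6_general (G : Type*) [Group G]
    (htf : Monoid.IsTorsionFree G)
    (hclass2le : commutator G ≤ Subgroup.center G)
    (hclass2ne : commutator G ≠ ⊥)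
    (σ : G → G)
    (hσanti : ∀ g₁ g₂ : G, σ (g₁ * g₂) = σ g₂ * σ g₁)
    (hσinvol : ∀ g : G, σ (σ g) = g) :
    ∃ x y : G, x⁻¹ * y⁻¹ * x * y ≠ 1 ∧
      (σ x = x ∨ σ x = x⁻¹) ∧ (σ y = y ∨ σ y = y⁻¹) := by
  have hτ := MonoidHom.invOfAntiHom_involutive hσanti hσinvol
  have h2 (g : G) (hg : g ^ 2 = 1) : g = 1 := by
    by_contra hne
    exact htf g hne (isOfFinOrder_iff_pow_eq_one.mpr ⟨2, two_pos, hg⟩)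
  obtain ⟨u, v, huv⟩ : ∃ u v : G, ¬Commute u v := by
    simpa [commutator_eq_bot_iff, isMulCommutative_iff, Commute, SemiconjBy] using hclass2ne
  obtain ⟨x, y, hxy, hx, hy⟩ := exists_not_commute_isFixedOrInverted hτ hclass2le h2 huv
  refine ⟨x, y, ?_, (isFixedOrInverted_inv_comp_iff σ x).mp hx,
    (isFixedOrInverted_inv_comp_iff σ y).mp hy⟩
  have hcomm : x⁻¹ * y⁻¹ * x * y = ⁅x⁻¹, y⁻¹⁆ := by simp [commutatorElement_def]
  rwa [hcomm, Ne, commutatorElement_eq_one_iff_commute, Commute.inv_inv_iff]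

/-- a finitely generated torsion-free nilpotent group of nilpotency
class exactly 2 with an involution σ contains a σ-invariant Heisenberg subgroup:
there are x, y with [x,y] ≠ 1, σ x ∈ {x, x⁻¹} and σ y ∈ {y, y⁻¹}. -/
theorem stmt_6 (G : Type*) [Group G] (hfg : Group.FG G)
    (htf : Monoid.IsTorsionFree G)
    (hclass2le : commutator G ≤ Subgroup.center G)
    (hclass2ne : commutator G ≠ ⊥)
    (σ : G → G)
    (hσanti : ∀ g₁ g₂ : G, σ (g₁ * g₂) = σ g₂ * σ g₁)
    (hσinvol : ∀ g : G, σ (σ g) = g) :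
    ∃ x y : G, x⁻¹ * y⁻¹ * x * y ≠ 1 ∧
      (σ x = x ∨ σ x = x⁻¹) ∧ (σ y = y ∨ σ y = y⁻¹) :=
  stmt_6_general G htf hclass2le hclass2ne σ hσanti hσinvol
end

section
/- Let G be a nonabelian torsion-free nilpotent group and let σ be an involution on G. Then G contains a σ-invariant Heisenberg subgroup; more precisely, there exist x, y ∈ G such that [x,y] ≠ 1, [x,[x,y]] = 1, [y,[x,y]] = 1, σ(x) ∈ {x, x⁻¹}, and σ(y) ∈ {y, y⁻¹}. -/
open Subgroup
open scoped commutatorElement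

theorem Monoid.IsTorsionFree.eq_one_of_pow_eq_one {G : Type*} [Monoid G]
    (htf : Monoid.IsTorsionFree G) {g : G} {n : ℕ} (hn : n ≠ 0) (h : g ^ n = 1) : g = 1 := by
  by_contra hg
  exact htf g hg (isOfFinOrder_iff_pow_eq_one.mpr ⟨n, Nat.pos_of_ne_zero hn, h⟩)

section Commutators

variable {G : Type*} [Group G]

theorem inv_mul_inv_mul_mul_eq_one_iff_commute {a b : G} :
    a⁻¹ * b⁻¹ * a * b = 1 ↔ Commute a b := by
  rw [← Commute.inv_inv_iff, ← commutatorElement_eq_one_iff_commute, commutatorElement_def,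
    inv_inv, inv_inv]

theorem commute_of_mul_mem_center {a b : G} (h : a * b ∈ center G) : Commute a b :=
  mul_left_cancel ((mem_center_iff.mp h a).trans (mul_assoc a b a))

theorem commute_of_inv_mul_mem_center {a b : G} (h : a⁻¹ * b ∈ center G) : Commute a b :=
  Commute.inv_left_iff.mp (commute_of_mul_mem_center h)

theorem commutatorElement_sq_left_s7 {x a : G} (h : Commute ⁅x, a⁆ x) :
    ⁅x ^ 2, a⁆ = ⁅x, a⁆ ^ 2 :=
  calc ⁅x ^ 2, a⁆ = x * ⁅x, a⁆ * x⁻¹ * ⁅x, a⁆ := by simp only [commutatorElement_def, sq]; group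
    _ = ⁅x, a⁆ * x * x⁻¹ * ⁅x, a⁆ := by rw [h.eq]
    _ = ⁅x, a⁆ ^ 2 := by rw [mul_inv_cancel_right, sq]

theorem commutatorElement_sq_right {x a : G} (h : Commute ⁅x, a⁆ a) :
    ⁅x, a ^ 2⁆ = ⁅x, a⁆ ^ 2 :=
  calc ⁅x, a ^ 2⁆ = ⁅x, a⁆ * (a * ⁅x, a⁆ * a⁻¹) := by simp only [commutatorElement_def, sq]; group
    _ = ⁅x, a⁆ * (⁅x, a⁆ * a * a⁻¹) := by rw [h.eq]
    _ = ⁅x, a⁆ ^ 2 := by rw [mul_inv_cancel_right, sq]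

theorem commutatorElement_mem_center_s7 {x : G} (hx : x ∈ Subgroup.upperCentralSeries G 2) (a : G) :
    ⁅x, a⁆ ∈ center G :=
  Subgroup.upperCentralSeries_one G ▸ Subgroup.mem_upperCentralSeries_succ_iff.mp hx a

theorem mem_center_of_sq_mem_center (htf : Monoid.IsTorsionFree G) {x : G}
    (hx : x ∈ Subgroup.upperCentralSeries G 2) (h : x ^ 2 ∈ center G) : x ∈ center G := by
  refine mem_center_iff.mpr fun a => (commutatorElement_eq_one_iff_commute.mp ?_).symm
  refine htf.eq_one_of_pow_eq_one two_ne_zero ?_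
  rw [← commutatorElement_sq_left_s7 (mem_center_iff.mp (commutatorElement_mem_center_s7 hx a) x).symm,
    commutatorElement_eq_one_iff_commute]
  exact (mem_center_iff.mp h a).symm

theorem mem_centralizer_of_sq_mem_centralizer (htf : Monoid.IsTorsionFree G) {x a : G}
    (hx : x ∈ Subgroup.upperCentralSeries G 2) (h : a ^ 2 ∈ centralizer {x}) :
    a ∈ centralizer {x} := by
  rw [mem_centralizer_singleton_iff] at h ⊢
  refine (commutatorElement_eq_one_iff_commute.mp ?_).symm
  refine htf.eq_one_of_pow_eq_one two_ne_zero ?_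
  rw [← commutatorElement_sq_right (mem_center_iff.mp (commutatorElement_mem_center_s7 hx a) a).symm,
    commutatorElement_eq_one_iff_commute]
  exact h.symm

theorem exists_mem_upperCentralSeries_two_notMem_center [Group.IsNilpotent G]
    (h : center G ≠ ⊤) : ∃ x ∈ Subgroup.upperCentralSeries G 2, x ∉ center G := by
  have : Nontrivial (G ⧸ center G) := QuotientGroup.nontrivial_iff.mpr h
  obtain ⟨q, hq, hq1⟩ :=
    (center (G ⧸ center G)).bot_or_exists_ne_one.resolve_left (Group.IsNilpotent.center_ne_bot _)
  obtain ⟨x, rfl⟩ := QuotientGroup.mk_surjective q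
  refine ⟨x, ?_, fun hx => hq1 ((QuotientGroup.eq_one_iff x).mpr hx)⟩
  rw [← Subgroup.comap_upperCentralSeries_quotient_center, Subgroup.upperCentralSeries_one]
  exact hq

end Commutators

section Involution

variable {G : Type*} [Group G] {τ : G →* G}

theorem comap_eq_self_of_involutive (H : Subgroup G) [H.Characteristic]
    (hτ : Function.Involutive τ) : H.comap τ = H :=
  ‹H.Characteristic›.fixed (MulEquiv.ofBijective τ hτ.bijective)

theorem involutive_quotientGroup_map {N : Subgroup G} [N.Normal] (hτ : Function.Involutive τ)
    (hN : N ≤ N.comap τ) : Function.Involutive (QuotientGroup.map N N τ hN) := by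
  intro q
  induction q using QuotientGroup.induction_on with
  | H g => simp only [QuotientGroup.map_mk, hτ g]

theorem exists_notMem_of_commute_apply (hτ : Function.Involutive τ) {C : Subgroup G} {g : G}
    (hg : Commute g (τ g)) (hg2 : g ^ 2 ∉ C) : ∃ y ∉ C, τ y = y ∨ τ y = y⁻¹ := by
  by_cases hfix : g * τ g ∈ C
  · refine ⟨g * (τ g)⁻¹, fun hinv => hg2 ?_, Or.inr ?_⟩
    · have : g ^ 2 = g * τ g * (g * (τ g)⁻¹) := by
        rw [sq, mul_assoc, ← mul_assoc (τ g), ← hg.eq]; group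
      exact this ▸ C.mul_mem hfix hinv
    · rw [map_mul, map_inv, hτ g, mul_inv_rev, inv_inv]
  · exact ⟨g * τ g, hfix, Or.inl (by rw [map_mul, hτ g]; exact hg.eq.symm)⟩

end Involution

theorem exists_notMem_apply_eq_or_eq_inv (G : Type*) [Group G] [Group.IsNilpotent G]
    (τ : G →* G) (hτ : Function.Involutive τ) (C : Subgroup G) (hCτ : C ≤ C.comap τ)
    (hC : ∀ g, g ^ 2 ∈ C → g ∈ C) (hCtop : C ≠ ⊤) : ∃ y ∉ C, τ y = y ∨ τ y = y⁻¹ := by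
  revert τ C
  refine Group.nilpotent_center_quotient_ind (P := fun G _ _ => ∀ τ : G →* G,
    Function.Involutive τ → ∀ C : Subgroup G, C ≤ C.comap τ → (∀ g, g ^ 2 ∈ C → g ∈ C) → C ≠ ⊤ →
      ∃ y ∉ C, τ y = y ∨ τ y = y⁻¹) G ?_ ?_
  · intro G _ _ τ _ C _ _ hCtop
    exact absurd (Subsingleton.elim C ⊤) hCtop
  · intro G _ _ ih τ hτ C hCτ hC hCtop
    by_cases hZC : center G ≤ C
    · have hZτ : center G ≤ (center G).comap τ := (comap_eq_self_of_involutive _ hτ).ge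
      set π := QuotientGroup.mk' (center G)
      have hCC : (C.map π).comap π = C := comap_map_eq_self (by rwa [QuotientGroup.ker_mk'])
      have hCπ : C.map π ≤ (C.map π).comap (QuotientGroup.map _ _ τ hZτ) := by
        rintro _ ⟨c, hc, rfl⟩
        exact ⟨τ c, hCτ hc, rfl⟩
      have hCπ_sqrt : ∀ q, q ^ 2 ∈ C.map π → q ∈ C.map π := by
        intro q hq
        obtain ⟨g, rfl⟩ := QuotientGroup.mk_surjective q
        have hg2 : g ^ 2 ∈ (C.map π).comap π := hq
        exact mem_map_of_mem π (hC g (hCC ▸ hg2))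
      have hCπ_top : C.map π ≠ ⊤ := fun h => hCtop (by rw [← hCC, h, comap_top])
      obtain ⟨q, hqC, hqτ⟩ := ih _ (involutive_quotientGroup_map hτ hZτ) _ hCπ hCπ_sqrt hCπ_top
      obtain ⟨y, rfl⟩ := QuotientGroup.mk_surjective q
      have hyC : y ∉ C := fun hy => hqC (mem_map_of_mem π hy)
      refine exists_notMem_of_commute_apply hτ ?_ fun hy2 => hyC (hC y hy2)
      rw [QuotientGroup.map_mk, ← QuotientGroup.mk_inv] at hqτ
      rcases hqτ with h | h
      · exact commute_of_inv_mul_mem_center (QuotientGroup.eq.mp h.symm)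
      · have hz := QuotientGroup.eq.mp h.symm
        rw [inv_inv] at hz
        exact commute_of_mul_mem_center hz
    · obtain ⟨z, hzZ, hzC⟩ := SetLike.not_le_iff_exists.mp hZC
      have hτz : τ z ∈ center G := (comap_eq_self_of_involutive (center G) hτ).ge hzZ
      exact exists_notMem_of_commute_apply hτ (mem_center_iff.mp hτz z) fun hz2 => hzC (hC z hz2)

section Nilpotent

variable {G : Type*} [Group G] [Group.IsNilpotent G] {τ : G →* G}

theorem exists_mem_upperCentralSeries_two_notMem_center_apply_eq_or_eq_inv
    (htf : Monoid.IsTorsionFree G) (hG : center G ≠ ⊤) (hτ : Function.Involutive τ) :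
    ∃ x ∈ Subgroup.upperCentralSeries G 2, x ∉ center G ∧ (τ x = x ∨ τ x = x⁻¹) := by
  set Z₂ := Subgroup.upperCentralSeries G 2
  let τ₂ : Z₂ →* Z₂ :=
    (τ.comp Z₂.subtype).codRestrict Z₂ fun a => (comap_eq_self_of_involutive Z₂ hτ).ge a.2
  obtain ⟨x₀, hx₀, hx₀Z⟩ := exists_mem_upperCentralSeries_two_notMem_center hG
  obtain ⟨x, hxZ, hxτ⟩ := exists_notMem_apply_eq_or_eq_inv Z₂ τ₂ (fun a => Subtype.ext (hτ a))
    ((center G).subgroupOf Z₂) (fun a ha => (comap_eq_self_of_involutive (center G) hτ).ge ha)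
    (fun a ha => mem_center_of_sq_mem_center htf a.2 ha)
    (fun h => hx₀Z (subgroupOf_eq_top.mp h hx₀))
  exact ⟨x, x.2, hxZ, hxτ.imp (congrArg Subtype.val) (congrArg Subtype.val)⟩

theorem exists_not_commute_apply_eq_or_eq_inv (htf : Monoid.IsTorsionFree G)
    (hτ : Function.Involutive τ) {x : G} (hx : x ∈ Subgroup.upperCentralSeries G 2)
    (hxZ : x ∉ center G) (hxτ : τ x = x ∨ τ x = x⁻¹) :
    ∃ y, ¬Commute x y ∧ (τ y = y ∨ τ y = y⁻¹) := by
  have hCτ : centralizer {x} ≤ (centralizer {x}).comap τ := by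
    intro c hc
    have hτc : Commute (τ c) (τ x) := Commute.map (mem_centralizer_singleton_iff.mp hc) τ
    rw [mem_comap, mem_centralizer_singleton_iff]
    rcases hxτ with h | h
    · exact h ▸ hτc
    · exact Commute.inv_right_iff.mp (h ▸ hτc)
  have hCtop : centralizer {x} ≠ ⊤ :=
    fun h => hxZ (centralizer_eq_top_iff_subset.mp h rfl)
  obtain ⟨y, hy, hyτ⟩ := exists_notMem_apply_eq_or_eq_inv G τ hτ _ hCτ
    (fun a ha => mem_centralizer_of_sq_mem_centralizer htf hx ha) hCtop
  exact ⟨y, fun h => hy (mem_centralizer_singleton_iff.mpr h.symm), hyτ⟩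

end Nilpotent

theorem map_inv_of_map_mul_rev {G : Type*} [Group G] {σ : G → G}
    (hσ : ∀ a b, σ (a * b) = σ b * σ a) (g : G) : σ g⁻¹ = (σ g)⁻¹ := by
  have hσ1 : σ 1 = 1 := by simpa using hσ 1 1
  exact eq_inv_of_mul_eq_one_right (by rw [← hσ, inv_mul_cancel, hσ1])

/-- a nonabelian torsion-free nilpotent group with an involution σ
contains a σ-invariant Heisenberg subgroup: there are x, y with [x,y] ≠ 1,
[x,[x,y]] = [y,[x,y]] = 1, σ x ∈ {x, x⁻¹} and σ y ∈ {y, y⁻¹}. -/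
theorem stmt_7 (G : Type*) [Group G]
    (hnonab : ∃ g₁ g₂ : G, g₁ * g₂ ≠ g₂ * g₁)
    (htf : Monoid.IsTorsionFree G)
    (hnilp : Group.IsNilpotent G)
    (σ : G → G)
    (hσanti : ∀ g₁ g₂ : G, σ (g₁ * g₂) = σ g₂ * σ g₁)
    (hσinvol : ∀ g : G, σ (σ g) = g) :
    ∃ x y : G, x⁻¹ * y⁻¹ * x * y ≠ 1 ∧
      x⁻¹ * (x⁻¹ * y⁻¹ * x * y)⁻¹ * x * (x⁻¹ * y⁻¹ * x * y) = 1 ∧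
      y⁻¹ * (x⁻¹ * y⁻¹ * x * y)⁻¹ * y * (x⁻¹ * y⁻¹ * x * y) = 1 ∧
      (σ x = x ∨ σ x = x⁻¹) ∧ (σ y = y ∨ σ y = y⁻¹) := by
  let τ : G →* G := MonoidHom.mk' (fun g => (σ g)⁻¹) fun a b => by rw [hσanti, mul_inv_rev]
  have hτ : Function.Involutive τ := fun g => by
    change (σ (σ g)⁻¹)⁻¹ = g
    rw [map_inv_of_map_mul_rev hσanti, inv_inv, hσinvol]
  have hστ (g : G) (h : τ g = g ∨ τ g = g⁻¹) : σ g = g ∨ σ g = g⁻¹ :=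
    (h.imp inv_eq_iff_eq_inv.mp inv_inj.mp).symm
  have hG : center G ≠ ⊤ := by
    obtain ⟨g₁, g₂, h⟩ := hnonab
    exact fun hZ => h (mem_center_iff.mp (hZ ▸ mem_top g₂) g₁)
  obtain ⟨x, hx, hxZ, hxτ⟩ :=
    exists_mem_upperCentralSeries_two_notMem_center_apply_eq_or_eq_inv htf hG hτ
  obtain ⟨y, hxy, hyτ⟩ := exists_not_commute_apply_eq_or_eq_inv htf hτ hx hxZ hxτ
  have hc : x⁻¹ * y⁻¹ * x * y ∈ center G := by
    simpa only [commutatorElement_def, inv_inv] using commutatorElement_mem_center_s7 (inv_mem hx) y⁻¹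
  exact ⟨x, y, inv_mul_inv_mul_mul_eq_one_iff_commute.not.mpr hxy,
    inv_mul_inv_mul_mul_eq_one_iff_commute.mpr (mem_center_iff.mp hc x),
    inv_mul_inv_mul_mul_eq_one_iff_commute.mpr (mem_center_iff.mp hc y), hστ x hxτ, hστ y hyτ⟩
end
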